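/- Let G be a finite directed acyclic graph with source s and sink t such that every vertex and edge lies on some directed s-t path, no vertex other than possibly s and t has total degree 1, no two adjacent vertices both have total degree 2 (unless one is s or t), and G admits a tracking set T of size at most k. Then G has at most 5(k+1)² vertices and at most 6(k+1)² edges. -/

import Mathlib

/-- A directed path from `s` to `t` in the digraph with edge relation `E`,
represented as its list of vertices. -/
def DiPath {V : Type*} (E : V → V → Prop) (s t : V) (p : List V) : Prop :=
  p.Chain' E ∧ p.Nodup ∧ p.head? = some s ∧ p.getLast? = some t

/-- `T` is a tracking set: any two distinct directed `s`-`t` paths intersect `T`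
in distinct subsets. -/
def Tracking {V : Type*} [DecidableEq V] (E : V → V → Prop) (s t : V) (T : Finset V) : Prop :=
  ∀ p q : List V, DiPath E s t p → DiPath E s t q →
    p.toFinset ∩ T = q.toFinset ∩ T → p = q

/-- The digraph with edge relation `E` has no directed cycle. -/
def DiAcyclic {V : Type*} (E : V → V → Prop) : Prop :=
  ∀ v : V, ¬ Relation.TransGen E v v

/-- `z` is reachable from `x` by a directed path avoiding all vertices of
`(T ∪ {t}) \ {x}`, i.e. `z ∈ Z_x`. -/
def ZReach {V : Type*} [DecidableEq V] (E : V → V → Prop) (T : Finset V) (t x z : V) : Prop :=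
  ∃ p : List V, p.Chain' E ∧ p.Nodup ∧ p.head? = some x ∧ p.getLast? = some z ∧
    ∀ v ∈ p, v ∈ T ∪ {t} → v = x

/-- `b` is reachable from `x` by a directed path avoiding all vertices of
`(T ∪ {t}) \ {x, b}`. -/
def BReach {V : Type*} [DecidableEq V] (E : V → V → Prop) (T : Finset V) (t x b : V) : Prop :=
  ∃ p : List V, p.Chain' E ∧ p.Nodup ∧ p.head? = some x ∧ p.getLast? = some b ∧
    ∀ v ∈ p, v ∈ T ∪ {t} → v = x ∨ v = b

/-- The out-degree of `z`. -/
def outdeg {V : Type*} [Fintype V] (E : V → V → Prop) [DecidableRel E] (z : V) : ℕ :=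
  (Finset.univ.filter fun y => E z y).card

/-- The in-degree of `z`. -/
def indeg {V : Type*} [Fintype V] (E : V → V → Prop) [DecidableRel E] (z : V) : ℕ :=
  (Finset.univ.filter fun y => E y z).card

/-!
Every vertex `v ≠ t` is reached from `s` or from some `x ∈ T` by a path meeting `T ∪ {t}`
only at its start. Because a tracking set also distinguishes paths between any two fixed
vertices, the vertices reached in this way from a fixed `x` form an out-tree, all of whose
out-edges end in the tree or in `T ∪ {t}`; counting these edges gives
`∑ (outdeg - 1) ≤ |T|` over the tree, hence `∑ᵥ (outdeg v - 1) ≤ (|T| + 1) |T|`, and the same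
for in-degrees by reversing the edges. This bounds the vertices of degree at least `3` and the
edges; a vertex of degree `2` has a successor that is `t` or of degree at least `3`.
-/

open Finset

section Paths

variable {V : Type*} {E : V → V → Prop} {a b c s t v x : V} {l m p : List V}

theorem DiAcyclic.flip (h : DiAcyclic E) : DiAcyclic (flip E) :=
  fun v hv => h v (Relation.transGen_swap.mp hv)

theorem DiAcyclic.nodup_of_isChain (h : DiAcyclic E) (hl : l.IsChain E) : l.Nodup :=
  List.nodup_iff_sublist.mpr fun v hv => h v <| by
    simpa using (hl.imp fun _ _ => Relation.TransGen.single).sublist hv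

theorem DiPath.of_isChain (hacyc : DiAcyclic E) (hc : p.IsChain E) (ha : p.head? = some a)
    (hb : p.getLast? = some b) : DiPath E a b p :=
  ⟨hc, hacyc.nodup_of_isChain hc, ha, hb⟩

theorem DiPath.head_mem (h : DiPath E a b p) : a ∈ p :=
  List.mem_of_mem_head? h.2.2.1

theorem DiPath.getLast_mem (h : DiPath E a b p) : b ∈ p :=
  List.mem_of_mem_getLast? h.2.2.2

theorem DiPath.reverse (h : DiPath E a b p) : DiPath (flip E) b a p.reverse := by
  obtain ⟨hc, hn, ha, hb⟩ := h
  exact ⟨List.isChain_reverse.mpr hc, List.nodup_reverse.mpr hn, by simpa using hb,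
    by simpa using ha⟩

theorem DiPath.left_of_append (h : DiPath E a b (l ++ x :: m)) : DiPath E a x (l ++ [x]) := by
  obtain ⟨hc, hn, ha, -⟩ := h
  refine ⟨(hc.prefix ?_ : List.IsChain E _), hn.sublist ?_, by simpa [List.head?_append] using ha,
    by simp⟩ <;> simp

theorem DiPath.right_of_append (h : DiPath E a b (l ++ x :: m)) : DiPath E x b (x :: m) := by
  obtain ⟨hc, hn, -, hb⟩ := h
  exact ⟨hc.right_of_append, hn.sublist (List.sublist_append_right _ _), rfl,
    by rwa [List.getLast?_append_cons] at hb⟩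

theorem DiPath.append (hacyc : DiAcyclic E) (hp : DiPath E a b p) (hq : DiPath E b c (b :: m)) :
    DiPath E a c (p ++ m) := by
  obtain ⟨hpc, -, hpa, hpb⟩ := hp
  obtain ⟨hqc, -, -, hqc'⟩ := hq
  obtain ⟨p, rfl⟩ := List.head?_eq_some_iff.mp hpa
  refine .of_isChain hacyc (List.isChain_append.mpr ⟨hpc, hqc.tail, ?_⟩) rfl ?_
  · intro u hu w hw
    obtain rfl : b = u := by simpa [hpb] using hu
    exact hqc.rel_head? hw
  · cases m with
    | nil => simp_all
    | cons w m => rw [List.getLast?_append_cons]; simpa using hqc'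

theorem DiPath.concat (hacyc : DiAcyclic E) (hp : DiPath E a b p) (h : E b c) :
    DiPath E a c (p ++ [c]) :=
  hp.append hacyc (.of_isChain hacyc (by simpa using h) rfl rfl)

theorem exists_rel_of_ne (hvert : ∀ v, ∃ P, DiPath E s t P ∧ v ∈ P) (hv : v ≠ t) :
    ∃ w, E v w := by
  obtain ⟨P, hP, hvP⟩ := hvert v
  obtain ⟨l, m, rfl⟩ := List.append_of_mem hvP
  obtain ⟨hc, -, -, hlast⟩ := hP.right_of_append
  cases m with
  | nil => exact absurd (by simpa using hlast) hv
  | cons w m => exact ⟨w, (List.isChain_cons_cons.mp hc).1⟩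

end Paths

section Tracking

variable {V : Type*} [DecidableEq V] {E : V → V → Prop} {s t a b v : V} {T : Finset V}
  {p q : List V}

theorem DiPath.toFinset_inter_eq (hp : DiPath E a b p) (hpT : ∀ w ∈ p, w ∈ T → w = a ∨ w = b) :
    p.toFinset ∩ T = {a, b} ∩ T := by
  ext w
  simp only [mem_inter, List.mem_toFinset, mem_insert, mem_singleton]
  refine ⟨fun ⟨hw, hwT⟩ => ⟨hpT w hw hwT, hwT⟩, ?_⟩
  rintro ⟨rfl | rfl, hwT⟩
  exacts [⟨hp.head_mem, hwT⟩, ⟨hp.getLast_mem, hwT⟩]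

/-- Extend both paths by the same `s`-`a` prefix and `b`-`t` suffix. -/
theorem Tracking.eq_of_diPath (hacyc : DiAcyclic E)
    (hvert : ∀ v, ∃ P, DiPath E s t P ∧ v ∈ P) (hT : Tracking E s t T)
    (hp : DiPath E a b p) (hq : DiPath E a b q) (hpq : p.toFinset ∩ T = q.toFinset ∩ T) :
    p = q := by
  obtain ⟨P, hP, haP⟩ := hvert a
  obtain ⟨l, _, rfl⟩ := List.append_of_mem haP
  obtain ⟨Q, hQ, hbQ⟩ := hvert b
  obtain ⟨_, m, rfl⟩ := List.append_of_mem hbQ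
  obtain ⟨p, rfl⟩ := List.head?_eq_some_iff.mp hp.2.2.1
  obtain ⟨q, rfl⟩ := List.head?_eq_some_iff.mp hq.2.2.1
  have glue : ∀ {r}, DiPath E a b (a :: r) → DiPath E s t (l ++ [a] ++ r ++ m) := fun hr =>
    (hP.left_of_append.append hacyc hr).append hacyc hQ.right_of_append
  have key := hT _ _ (glue hp) (glue hq) <| by
    ext w
    have := Finset.ext_iff.mp hpq w
    simp only [mem_inter, List.mem_toFinset, List.mem_append, List.mem_cons] at this ⊢
    tauto
  simpa using key

theorem zReach_iff :
    ZReach E T t a b ↔ ∃ p, DiPath E a b p ∧ ∀ w ∈ p, w ∈ T ∪ {t} → w = a := by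
  simp only [ZReach, DiPath, and_assoc]

/-- `q` starts at the last visit of `p` to `S`, or at `a` if there is none. -/
theorem DiPath.exists_suffix_avoiding (hp : DiPath E a b p) (S : Finset V) :
    ∃ x ∈ insert a S, ∃ q, q <:+ p ∧ DiPath E x b q ∧ ∀ w ∈ q, w ∈ S → w = x := by
  cases h : p.reverse.find? (· ∈ S) with
  | none =>
    refine ⟨a, mem_insert_self _ _, p, List.suffix_refl p, hp, fun w hw hwS => ?_⟩
    exact absurd hwS (by simpa using List.find?_eq_none.mp h w (List.mem_reverse.mpr hw))
  | some x =>
    obtain ⟨hx, as, bs, hrev, has⟩ := List.find?_eq_some_iff_append.mp h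
    obtain rfl : p = bs.reverse ++ x :: as.reverse := by simpa using congrArg List.reverse hrev
    refine ⟨x, mem_insert_of_mem (by simpa using hx), _, List.suffix_append _ _,
      hp.right_of_append, fun w hw hwS => ?_⟩
    rcases List.mem_cons.mp hw with rfl | hw
    · rfl
    · exact absurd hwS (by simpa using has w (List.mem_reverse.mp hw))

theorem exists_zReach_of_ne (hvert : ∀ v, ∃ P, DiPath E s t P ∧ v ∈ P) (hv : v ≠ t) :
    ∃ x ∈ insert s T, x ≠ t ∧ ZReach E T t x v := by
  obtain ⟨P, hP, hvP⟩ := hvert v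
  obtain ⟨l, m, rfl⟩ := List.append_of_mem hvP
  have htl : t ∉ l ++ [v] := by
    have htm : t ∈ v :: m := hP.right_of_append.getLast_mem
    rw [List.mem_append, List.mem_singleton, not_or]
    exact ⟨fun htl => (List.nodup_append.mp hP.2.1).2.2 t htl t htm rfl, Ne.symm hv⟩
  obtain ⟨x, hx, q, hql, hq, hqT⟩ := hP.left_of_append.exists_suffix_avoiding T
  refine ⟨x, hx, fun hxt => htl (hxt ▸ hql.subset hq.head_mem),
    zReach_iff.mpr ⟨q, hq, fun w hw hwT => ?_⟩⟩
  rcases mem_union.mp hwT with h | h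
  · exact hqT w hw h
  · exact absurd (mem_singleton.mp h ▸ hql.subset hw) htl

theorem Tracking.flip (hT : Tracking E s t T) : Tracking (flip E) t s T :=
  fun p q hp hq hpq => List.reverse_injective (hT _ _ hp.reverse hq.reverse (by simpa using hpq))

end Tracking

section ZReach

variable {V : Type*} [DecidableEq V] {E : V → V → Prop} {s t u u' v x : V} {T : Finset V}

theorem ZReach.of_rel (hacyc : DiAcyclic E) (hu : ZReach E T t x u) (huv : E u v)
    (hv : v ∉ T ∪ {t}) : ZReach E T t x v := by
  obtain ⟨p, hp, hpT⟩ := zReach_iff.mp hu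
  refine zReach_iff.mpr ⟨_, hp.concat hacyc huv, fun w hw hwT => ?_⟩
  rcases List.mem_append.mp hw with hw | hw
  · exact hpT w hw hwT
  · exact absurd (List.mem_singleton.mp hw ▸ hwT) hv

theorem ZReach.ne_of_rel (hacyc : DiAcyclic E) (hu : ZReach E T t x u) (huv : E u v) :
    v ≠ x := by
  rintro rfl
  obtain ⟨p, hp, -⟩ := zReach_iff.mp hu
  exact (List.nodup_append.mp (hp.concat hacyc huv).2.1).2.2 v hp.head_mem v (by simp) rfl

theorem ZReach.ne_of_source_ne (hu : ZReach E T t x u) (hx : x ≠ t) : u ≠ t := by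
  rintro rfl
  obtain ⟨p, hp, hpT⟩ := zReach_iff.mp hu
  exact hx (hpT u hp.getLast_mem (by simp)).symm

/-- The vertices `ZReach`-reachable from `x` form an out-tree rooted at `x`: two of them
with a common successor `v` give two `x`-`v` paths meeting `T` only in `{x, v}`. -/
theorem ZReach.eq_of_rel (hacyc : DiAcyclic E)
    (hvert : ∀ v, ∃ P, DiPath E s t P ∧ v ∈ P) (hT : Tracking E s t T)
    (hu : ZReach E T t x u) (hu' : ZReach E T t x u') (huv : E u v) (hu'v : E u' v) :
    u = u' := by
  obtain ⟨p, hp, hpT⟩ := zReach_iff.mp hu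
  obtain ⟨q, hq, hqT⟩ := zReach_iff.mp hu'
  have trace : ∀ {r}, (∀ w ∈ r, w ∈ T ∪ {t} → w = x) →
      ∀ w ∈ r ++ [v], w ∈ T → w = x ∨ w = v := fun hr w hw hwT => by
    rcases List.mem_append.mp hw with hw | hw
    exacts [.inl (hr w hw (mem_union_left _ hwT)), .inr (List.mem_singleton.mp hw)]
  have hpv := hp.concat hacyc huv
  have hqv := hq.concat hacyc hu'v
  obtain rfl : p = q := List.append_cancel_right <| hT.eq_of_diPath hacyc hvert hpv hqv <| by
    rw [hpv.toFinset_inter_eq (trace hpT), hqv.toFinset_inter_eq (trace hqT)]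
  exact Option.some_injective _ (hp.2.2.2.symm.trans hq.2.2.2)

end ZReach

section Counting

theorem card_filter_two_le_sum_tsub_one {ι : Type*} (s : Finset ι) (f : ι → ℕ) :
    (s.filter (2 ≤ f ·)).card ≤ ∑ i ∈ s, (f i - 1) :=
  calc (s.filter (2 ≤ f ·)).card = ∑ _ ∈ s.filter (2 ≤ f ·), 1 := card_eq_sum_ones _
    _ ≤ ∑ i ∈ s.filter (2 ≤ f ·), (f i - 1) :=
      sum_le_sum fun _ hi => Nat.le_sub_of_add_le (mem_filter.mp hi).2
    _ ≤ ∑ i ∈ s, (f i - 1) := sum_le_sum_of_subset (filter_subset _ _)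

theorem sum_le_sum_tsub_one_add_card {ι : Type*} {s u : Finset ι} (h : s ⊆ u) (f : ι → ℕ) :
    ∑ i ∈ s, f i ≤ ∑ i ∈ u, (f i - 1) + s.card :=
  calc ∑ i ∈ s, f i ≤ ∑ i ∈ s, ((f i - 1) + 1) := sum_le_sum fun _ _ => le_tsub_add
    _ = ∑ i ∈ s, (f i - 1) + s.card := by rw [sum_add_distrib, card_eq_sum_ones]
    _ ≤ ∑ i ∈ u, (f i - 1) + s.card := by gcongr

theorem sum_le_sum_sum_filter_of_forall_exists {ι κ : Type*} [Fintype ι] (X : Finset κ)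
    (P : κ → ι → Prop) [∀ x, DecidablePred (P x)] {f : ι → ℕ}
    (h : ∀ i, f i ≠ 0 → ∃ x ∈ X, P x i) :
    ∑ i, f i ≤ ∑ x ∈ X, ∑ i ∈ univ.filter (P x), f i :=
  calc ∑ i, f i ≤ ∑ i, ∑ x ∈ X, if P x i then f i else 0 := sum_le_sum fun i _ => by
        rcases eq_or_ne (f i) 0 with h0 | h0
        · simp [h0]
        · obtain ⟨x, hx, hPx⟩ := h i h0
          simpa [hPx] using single_le_sum (f := fun x => if P x i then f i else 0)
            (fun _ _ => Nat.zero_le _) hx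
    _ = ∑ x ∈ X, ∑ i ∈ univ.filter (P x), f i := by rw [sum_comm]; simp only [sum_filter]

variable {V : Type*} [Fintype V] [DecidableEq V] {E : V → V → Prop} [DecidableRel E]
  {s t x : V} {T : Finset V}

theorem sum_outdeg_add_one_le {Z S : Finset V} (hx : x ∈ Z)
    (hdisj : (Z : Set V).PairwiseDisjoint fun u => univ.filter (E u))
    (hsub : ∀ u ∈ Z, univ.filter (E u) ⊆ (Z ∪ S).erase x) :
    ∑ u ∈ Z, outdeg E u + 1 ≤ Z.card + S.card :=
  calc ∑ u ∈ Z, outdeg E u + 1 = (Z.biUnion fun u => univ.filter (E u)).card + 1 := by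
        rw [card_biUnion hdisj]; rfl
    _ ≤ ((Z ∪ S).erase x).card + 1 := by gcongr; exact biUnion_subset.mpr hsub
    _ = (Z ∪ S).card := card_erase_add_one (mem_union_left _ hx)
    _ ≤ Z.card + S.card := card_union_le _ _

theorem sum_outdeg_sub_one_zReach_le (hacyc : DiAcyclic E)
    (hvert : ∀ v, ∃ P, DiPath E s t P ∧ v ∈ P) (hT : Tracking E s t T) (hxt : x ≠ t)
    [DecidablePred (ZReach E T t x)] :
    ∑ v ∈ univ.filter (ZReach E T t x), (outdeg E v - 1) ≤ T.card := by
  set Z := univ.filter (ZReach E T t x)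
  have hxZ : x ∈ Z := mem_filter.mpr
    ⟨mem_univ _, zReach_iff.mpr ⟨[x], .of_isChain hacyc (by simp) rfl rfl, by simp⟩⟩
  have hpos : ∀ u ∈ Z, 1 ≤ outdeg E u := fun u hu => card_pos.mpr <| filter_nonempty_iff.mpr <|
    by simpa using exists_rel_of_ne hvert ((mem_filter.mp hu).2.ne_of_source_ne hxt)
  have hdisj : (Z : Set V).PairwiseDisjoint fun u => univ.filter (E u) :=
    fun u hu u' hu' hne => disjoint_left.mpr fun v hv hv' =>
      hne ((mem_filter.mp hu).2.eq_of_rel hacyc hvert hT (mem_filter.mp hu').2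
        (mem_filter.mp hv).2 (mem_filter.mp hv').2)
  have hsub : ∀ u ∈ Z, univ.filter (E u) ⊆ (Z ∪ (T ∪ {t})).erase x := by
    intro u hu v hv
    have huv : E u v := (mem_filter.mp hv).2
    have hu := (mem_filter.mp hu).2
    refine mem_erase.mpr ⟨hu.ne_of_rel hacyc huv, ?_⟩
    by_cases hvS : v ∈ T ∪ {t}
    · exact mem_union_right _ hvS
    · exact mem_union_left _ (mem_filter.mpr ⟨mem_univ _, hu.of_rel hacyc huv hvS⟩)
  have htree := sum_outdeg_add_one_le hxZ hdisj hsub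
  have hS : (T ∪ {t}).card ≤ T.card + 1 := card_union_le T {t}
  rw [sum_tsub_distrib _ hpos, sum_const, smul_eq_mul, mul_one]
  omega

theorem sum_outdeg_sub_one_le (hacyc : DiAcyclic E) (hsink : ∀ v, ¬ E t v)
    (hvert : ∀ v, ∃ P, DiPath E s t P ∧ v ∈ P) (hT : Tracking E s t T) :
    ∑ v, (outdeg E v - 1) ≤ (T.card + 1) * T.card := by
  classical
  set X := (insert s T).filter (· ≠ t)
  have hcover : ∀ v, outdeg E v - 1 ≠ 0 → ∃ x ∈ X, ZReach E T t x v := by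
    intro v hv
    have hvt : v ≠ t := by rintro rfl; simp [outdeg, hsink] at hv
    obtain ⟨x, hx, hxt, hxv⟩ := exists_zReach_of_ne hvert hvt
    exact ⟨x, mem_filter.mpr ⟨hx, hxt⟩, hxv⟩
  calc ∑ v, (outdeg E v - 1)
      ≤ ∑ x ∈ X, ∑ v ∈ univ.filter (ZReach E T t x), (outdeg E v - 1) :=
        sum_le_sum_sum_filter_of_forall_exists _ _ hcover
    _ ≤ ∑ x ∈ X, T.card :=
        sum_le_sum fun x hx => sum_outdeg_sub_one_zReach_le hacyc hvert hT (mem_filter.mp hx).2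
    _ ≤ (T.card + 1) * T.card := by
        rw [sum_const, smul_eq_mul]
        gcongr
        exact (card_filter_le _ _).trans (card_insert_le _ _)

theorem sum_indeg_sub_one_le (hacyc : DiAcyclic E) (hsrc : ∀ v, ¬ E v s)
    (hvert : ∀ v, ∃ P, DiPath E s t P ∧ v ∈ P) (hT : Tracking E s t T) :
    ∑ v, (indeg E v - 1) ≤ (T.card + 1) * T.card :=
  letI : DecidableRel (flip E) := fun a b => inferInstanceAs (Decidable (E b a))
  sum_outdeg_sub_one_le hacyc.flip hsrc
    (fun v => let ⟨P, hP, hvP⟩ := hvert v; ⟨P.reverse, hP.reverse, List.mem_reverse.mpr hvP⟩)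
    hT.flip

end Counting

section Reduced

variable {V : Type*} [Fintype V] [DecidableEq V] {E : V → V → Prop} [DecidableRel E] {s t : V}

theorem card_filter_three_le_deg_le :
    (univ.filter fun v => 3 ≤ indeg E v + outdeg E v).card ≤
      ∑ v, (outdeg E v - 1) + ∑ v, (indeg E v - 1) :=
  calc _ ≤ (univ.filter (2 ≤ outdeg E ·) ∪ univ.filter (2 ≤ indeg E ·)).card :=
        card_le_card fun v hv => by
          simp only [mem_filter, mem_union, mem_univ, true_and] at hv ⊢
          omega
    _ ≤ ∑ v, (outdeg E v - 1) + ∑ v, (indeg E v - 1) := (card_union_le _ _).trans <|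
        add_le_add (card_filter_two_le_sum_tsub_one _ _) (card_filter_two_le_sum_tsub_one _ _)

/-- Vertices of degree `2` are charged to the in-degree of their successor, which is `t` or a
vertex of degree at least `3`. -/
theorem card_filter_deg_eq_two_le (hsrc : ∀ v, ¬ E v s) (hsucc : ∀ v, v ≠ t → ∃ w, E v w)
    (hdeg1 : ∀ v, v ≠ s → v ≠ t → 2 ≤ indeg E v + outdeg E v)
    (hdeg2 : ∀ u v, E u v → indeg E u + outdeg E u = 2 → indeg E v + outdeg E v = 2 →
      u = s ∨ u = t ∨ v = s ∨ v = t) :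
    (univ.filter fun v => v ≠ s ∧ v ≠ t ∧ indeg E v + outdeg E v = 2).card ≤
      ∑ v, (indeg E v - 1) + (univ.filter fun v => 3 ≤ indeg E v + outdeg E v).card + 1 := by
  set W := univ.filter fun v => 3 ≤ indeg E v + outdeg E v
  have hsub : (univ.filter fun v => v ≠ s ∧ v ≠ t ∧ indeg E v + outdeg E v = 2) ⊆
      (insert t W).biUnion fun w => univ.filter (E · w) := by
    intro v hv
    obtain ⟨hvs, hvt, hv2⟩ : v ≠ s ∧ v ≠ t ∧ indeg E v + outdeg E v = 2 := by simpa using hv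
    obtain ⟨w, hvw⟩ := hsucc v hvt
    refine mem_biUnion.mpr ⟨w, ?_, by simpa using hvw⟩
    by_cases hwt : w = t
    · exact hwt ▸ mem_insert_self _ _
    have hws : w ≠ s := fun h => hsrc v (h ▸ hvw)
    have hw2 : indeg E w + outdeg E w ≠ 2 := fun hw2 => by
      rcases hdeg2 v w hvw hv2 hw2 with h | h | h | h <;> contradiction
    have := hdeg1 w hws hwt
    exact mem_insert_of_mem (mem_filter.mpr ⟨mem_univ _, by omega⟩)
  calc _ ≤ ∑ w ∈ insert t W, indeg E w := (card_le_card hsub).trans card_biUnion_le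
    _ ≤ ∑ v, (indeg E v - 1) + (insert t W).card :=
        sum_le_sum_tsub_one_add_card (subset_univ _) _
    _ ≤ ∑ v, (indeg E v - 1) + W.card + 1 := by have := card_insert_le t W; omega

theorem card_le_of_reduced (hsrc : ∀ v, ¬ E v s) (hsucc : ∀ v, v ≠ t → ∃ w, E v w)
    (hdeg1 : ∀ v, v ≠ s → v ≠ t → 2 ≤ indeg E v + outdeg E v)
    (hdeg2 : ∀ u v, E u v → indeg E u + outdeg E u = 2 → indeg E v + outdeg E v = 2 →
      u = s ∨ u = t ∨ v = s ∨ v = t) :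
    Fintype.card V ≤ 3 + 2 * ∑ v, (outdeg E v - 1) + 3 * ∑ v, (indeg E v - 1) := by
  set W := univ.filter fun v => 3 ≤ indeg E v + outdeg E v
  set D := univ.filter fun v => v ≠ s ∧ v ≠ t ∧ indeg E v + outdeg E v = 2
  have hW : W.card ≤ ∑ v, (outdeg E v - 1) + ∑ v, (indeg E v - 1) := card_filter_three_le_deg_le
  have hD : D.card ≤ ∑ v, (indeg E v - 1) + W.card + 1 := card_filter_deg_eq_two_le hsrc hsucc hdeg1 hdeg2
  have hV : Fintype.card V ≤ 2 + D.card + W.card :=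
    calc Fintype.card V = (univ : Finset V).card := card_univ.symm
      _ ≤ ({s, t} ∪ D ∪ W).card := card_le_card fun v _ => by
          by_cases hvs : v = s
          · simp [hvs]
          by_cases hvt : v = t
          · simp [hvt]
          have := hdeg1 v hvs hvt
          simp only [D, W, mem_union, mem_insert, mem_singleton, mem_filter, mem_univ, hvs, hvt,
            ne_eq, not_false_eq_true, true_and, or_self, false_or]
          omega
      _ ≤ ({s, t} : Finset V).card + D.card + W.card :=
          (card_union_le _ _).trans (by gcongr; exact card_union_le _ _)
      _ ≤ 2 + D.card + W.card := by gcongr; exact card_le_two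
  omega

end Reduced

theorem dag_quadratic_kernel_bound_general {V : Type*} [Fintype V] [DecidableEq V]
    (E : V → V → Prop) [DecidableRel E] (s t : V)
    (hacyc : DiAcyclic E)
    (hsrc : ∀ v : V, ¬ E v s) (hsink : ∀ v : V, ¬ E t v)
    (hvert : ∀ v : V, ∃ p : List V, DiPath E s t p ∧ v ∈ p)
    (hdeg1 : ∀ v : V, v ≠ s → v ≠ t → 2 ≤ indeg E v + outdeg E v)
    (hdeg2 : ∀ u v : V, E u v →
      indeg E u + outdeg E u = 2 → indeg E v + outdeg E v = 2 →
      u = s ∨ u = t ∨ v = s ∨ v = t)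
    (k : ℕ) (T : Finset V) (hT : Tracking E s t T) (hTk : T.card ≤ k) :
    Fintype.card V ≤ 5 * (k + 1) ^ 2 ∧ (∑ v : V, outdeg E v) ≤ 6 * (k + 1) ^ 2 := by
  have hout := sum_outdeg_sub_one_le hacyc hsink hvert hT
  have hin := sum_indeg_sub_one_le hacyc hsrc hvert hT
  have hV := card_le_of_reduced hsrc (fun _ => exists_rel_of_ne hvert) hdeg1 hdeg2
  have hE := sum_le_sum_tsub_one_add_card (subset_refl univ) (outdeg E)
  rw [card_univ] at hE
  have hk : (T.card + 1) * T.card ≤ (k + 1) * k := Nat.mul_le_mul (by omega) hTk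
  constructor <;> nlinarith

/-- quadratic kernel bound for reduced DAG instances. -/
theorem dag_quadratic_kernel_bound {V : Type*} [Fintype V] [DecidableEq V]
    (E : V → V → Prop) [DecidableRel E] (s t : V)
    (hacyc : DiAcyclic E)
    (hsrc : ∀ v : V, ¬ E v s) (hsink : ∀ v : V, ¬ E t v)
    (hvert : ∀ v : V, ∃ p : List V, DiPath E s t p ∧ v ∈ p)
    (hedge : ∀ u v : V, E u v → ∃ p : List V, DiPath E s t p ∧ [u, v] <:+: p)
    (hdeg1 : ∀ v : V, v ≠ s → v ≠ t → 2 ≤ indeg E v + outdeg E v)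
    (hdeg2 : ∀ u v : V, E u v →
      indeg E u + outdeg E u = 2 → indeg E v + outdeg E v = 2 →
      u = s ∨ u = t ∨ v = s ∨ v = t)
    (k : ℕ) (T : Finset V) (hT : Tracking E s t T) (hTk : T.card ≤ k) :
    Fintype.card V ≤ 5 * (k + 1) ^ 2 ∧ (∑ v : V, outdeg E v) ≤ 6 * (k + 1) ^ 2 :=
  dag_quadratic_kernel_bound_general E s t hacyc hsrc hsink hvert hdeg1 hdeg2 k T hT hTk
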